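/- Let S be a ramified inverse semigroup with zero. Then every finitely generated compatible order ideal {a₁,…,aₙ}↓ equals {b₁,…,bₘ}↓ for some pairwise orthogonal set {b₁,…,bₘ} ⊆ {a₁,…,aₙ}. -/

import Mathlib

/-!
Take for `{b₁,…,bₘ}` the elements of `F` that are maximal in `F` for the natural partial order.
Every element of the finite set `F` lies below one of them, so both sets generate the same order
ideal. Two compatible elements `a, b` have the meet `a b⁻¹ b`; if it is zero they are orthogonal,
otherwise ramification makes `a` and `b` comparable. Hence two distinct maximal elements of `F`,
being compatible but not comparable, are orthogonal.
-/

/-- An inverse semigroup: every element has a unique (generalized) inverse. -/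
class InverseSemigroup (S : Type*) extends Semigroup S, Inv S where
  mul_inv_mul : ∀ s : S, s * s⁻¹ * s = s
  inv_mul_inv : ∀ s : S, s⁻¹ * s * s⁻¹ = s⁻¹
  inv_unique : ∀ s t : S, s * t * s = s → t * s * t = t → t = s⁻¹

/-- An inverse semigroup with a zero element. -/
class InverseSemigroupWithZero (S : Type*) extends InverseSemigroup S, Zero S where
  zero_mul : ∀ s : S, 0 * s = 0
  mul_zero : ∀ s : S, s * 0 = 0

section Defs
variable {S : Type*}

/-- The natural partial order on an inverse semigroup: `a ≤ b` iff `a = b (a⁻¹ a)`. -/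
def nle [InverseSemigroup S] (a b : S) : Prop := a = b * (a⁻¹ * a)

/-- Compatibility: `a⁻¹ b` and `a b⁻¹` are both idempotent. -/
def compat [InverseSemigroup S] (a b : S) : Prop :=
  IsIdempotentElem (a⁻¹ * b) ∧ IsIdempotentElem (a * b⁻¹)

/-- Orthogonality: `a⁻¹ b = 0 = a b⁻¹`. -/
def orth [InverseSemigroupWithZero S] (a b : S) : Prop := a⁻¹ * b = 0 ∧ a * b⁻¹ = 0

/-- `u` is the least upper bound (join) of `a` and `b` in the natural partial order. -/
def isJoin [InverseSemigroup S] (u a b : S) : Prop :=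
  nle a u ∧ nle b u ∧ ∀ c, nle a c → nle b c → nle u c

/-- `m` is the greatest lower bound (meet) of `a` and `b` in the natural partial order. -/
def isMeet [InverseSemigroup S] (m a b : S) : Prop :=
  nle m a ∧ nle m b ∧ ∀ c, nle c a → nle c b → nle c m

/-- `c = a ∖ b`: `c ≤ a`, `c ⊥ b` and `a = b ∨ c`. -/
def isDiff [InverseSemigroupWithZero S] (c a b : S) : Prop :=
  nle c a ∧ orth c b ∧ isJoin a b c

end Defs

/-- A distributive inverse semigroup: compatible pairs have joins, and
multiplication distributes over such joins. -/
class DistributiveInverseSemigroup (S : Type*) extends InverseSemigroupWithZero S where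
  join_exists : ∀ a b : S, compat a b → ∃ u, isJoin u a b
  mul_join_left : ∀ a b u c : S, isJoin u a b → isJoin (c * u) (c * a) (c * b)
  mul_join_right : ∀ a b u c : S, isJoin u a b → isJoin (u * c) (a * c) (b * c)

/-- A Boolean inverse semigroup: a distributive inverse semigroup whose idempotents
form a (generalized) Boolean algebra, i.e. relative complements of idempotents exist. -/
class BooleanInverseSemigroup (S : Type*) extends DistributiveInverseSemigroup S where
  relcomp : ∀ e f : S, IsIdempotentElem e → IsIdempotentElem f → nle f e →
    ∃ c, IsIdempotentElem c ∧ isDiff c e f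

namespace InverseSemigroup

section
variable {S : Type*} [InverseSemigroup S]

theorem inv_inv_eq (a : S) : a⁻¹⁻¹ = a :=
  (inv_unique a⁻¹ a (inv_mul_inv a) (mul_inv_mul a)).symm

theorem inv_eq_self_of_isIdempotentElem {e : S} (he : IsIdempotentElem e) : e⁻¹ = e :=
  (inv_unique e e (by rw [he, he]) (by rw [he, he])).symm

theorem isIdempotentElem_inv_mul_self (a : S) : IsIdempotentElem (a⁻¹ * a) := by
  rw [IsIdempotentElem, ← mul_assoc, inv_mul_inv]

theorem isIdempotentElem_mul_self_inv (a : S) : IsIdempotentElem (a * a⁻¹) := by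
  rw [IsIdempotentElem, ← mul_assoc, mul_inv_mul]

theorem isIdempotentElem_mul {e f : S} (he : IsIdempotentElem e) (hf : IsIdempotentElem f) :
    IsIdempotentElem (e * f) := by
  set x := (e * f)⁻¹ with hx
  -- `f x e` is an inverse of `e f`, so it equals `x`
  have hfxe : f * x * e = x := by
    refine inv_unique (e * f) (f * x * e) ?_ ?_
    · calc e * f * (f * x * e) * (e * f) = e * (f * f) * x * (e * e) * f := by
            simp only [mul_assoc]
        _ = e * f * x * (e * f) := by rw [hf, he]; simp only [mul_assoc]
        _ = e * f := mul_inv_mul (e * f)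
    · calc f * x * e * (e * f) * (f * x * e) = f * (x * ((e * e) * ((f * f) * (x * e)))) := by
            simp only [mul_assoc]
        _ = f * (x * (e * f) * x) * e := by rw [he, hf]; simp only [mul_assoc]
        _ = f * x * e := by rw [inv_mul_inv]
  have hxx : IsIdempotentElem x :=
    calc x * x = f * (x * (e * f) * x) * e := by
          conv_lhs => rw [← hfxe]
          simp only [mul_assoc]
      _ = x := by rw [inv_mul_inv, ← hfxe]
  rwa [← inv_inv_eq (e * f), ← hx, inv_eq_self_of_isIdempotentElem hxx]

theorem mul_comm_of_isIdempotentElem {e f : S} (he : IsIdempotentElem e)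
    (hf : IsIdempotentElem f) : e * f = f * e := by
  have hef := isIdempotentElem_mul he hf
  have hfe := isIdempotentElem_mul hf he
  have : f * e = (e * f)⁻¹ := by
    refine inv_unique (e * f) (f * e) ?_ ?_
    · calc e * f * (f * e) * (e * f) = e * ((f * f) * ((e * e) * f)) := by simp only [mul_assoc]
        _ = e * f := by rw [hf, he, ← mul_assoc, hef]
    · calc f * e * (e * f) * (f * e) = f * ((e * e) * ((f * f) * e)) := by simp only [mul_assoc]
        _ = f * e := by rw [he, hf, ← mul_assoc, hfe]
  rw [this, inv_eq_self_of_isIdempotentElem hef]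

theorem mul_inv_rev_eq (a b : S) : (a * b)⁻¹ = b⁻¹ * a⁻¹ := by
  have hcomm := mul_comm_of_isIdempotentElem (isIdempotentElem_mul_self_inv b)
    (isIdempotentElem_inv_mul_self a)
  refine (inv_unique (a * b) (b⁻¹ * a⁻¹) ?_ ?_).symm
  · calc a * b * (b⁻¹ * a⁻¹) * (a * b) = a * ((b * b⁻¹) * (a⁻¹ * a)) * b := by
          simp only [mul_assoc]
      _ = (a * a⁻¹ * a) * (b * b⁻¹ * b) := by rw [hcomm]; simp only [mul_assoc]
      _ = a * b := by rw [mul_inv_mul, mul_inv_mul]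
  · calc b⁻¹ * a⁻¹ * (a * b) * (b⁻¹ * a⁻¹) = b⁻¹ * ((a⁻¹ * a) * (b * b⁻¹)) * a⁻¹ := by
          simp only [mul_assoc]
      _ = (b⁻¹ * b * b⁻¹) * (a⁻¹ * a * a⁻¹) := by rw [← hcomm]; simp only [mul_assoc]
      _ = b⁻¹ * a⁻¹ := by rw [inv_mul_inv, inv_mul_inv]

theorem nle_of_eq_mul_of_isIdempotentElem {a b e : S} (he : IsIdempotentElem e) (h : a = b * e) :
    nle a b := by
  have hinv : a⁻¹ * a = (b⁻¹ * b) * e :=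
    calc a⁻¹ * a = e * (b⁻¹ * b) * e := by
          rw [h, mul_inv_rev_eq, inv_eq_self_of_isIdempotentElem he]; simp only [mul_assoc]
      _ = (b⁻¹ * b) * e := by
          rw [mul_comm_of_isIdempotentElem he (isIdempotentElem_inv_mul_self b), mul_assoc, he]
  rw [nle, hinv, ← mul_assoc, ← mul_assoc, mul_inv_mul, ← h]

theorem isIdempotentElem_inv_mul_mul {e : S} (he : IsIdempotentElem e) (b : S) :
    IsIdempotentElem (b⁻¹ * e * b) :=
  calc b⁻¹ * e * b * (b⁻¹ * e * b) = b⁻¹ * (e * (b * b⁻¹)) * e * b := by simp only [mul_assoc]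
    _ = b⁻¹ * e * b := by
        rw [mul_comm_of_isIdempotentElem he (isIdempotentElem_mul_self_inv b)]
        simp only [mul_assoc]
        rw [← mul_assoc e e, he, ← mul_assoc, ← mul_assoc, inv_mul_inv]

theorem nle_of_eq_mul_of_isIdempotentElem_left {a b e : S} (he : IsIdempotentElem e)
    (h : a = e * b) : nle a b :=
  nle_of_eq_mul_of_isIdempotentElem (isIdempotentElem_inv_mul_mul he b) <|
    calc a = e * (b * b⁻¹) * b := by rw [h, mul_assoc e, mul_inv_mul]
      _ = b * (b⁻¹ * e * b) := by
          rw [mul_comm_of_isIdempotentElem he (isIdempotentElem_mul_self_inv b)]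
          simp only [mul_assoc]

theorem nle_antisymm {a b : S} (hab : nle a b) (hba : nle b a) : a = b := by
  set e := a⁻¹ * a
  set f := b⁻¹ * b
  have he : IsIdempotentElem e := isIdempotentElem_inv_mul_self a
  have hf : IsIdempotentElem f := isIdempotentElem_inv_mul_self b
  have hb : b = b * (e * f) := by rw [← mul_assoc, ← hab, ← hba]
  have hbe : b * e = b :=
    calc b * e = b * (e * f) * e := by rw [← hb]
      _ = b * (f * (e * e)) := by rw [mul_comm_of_isIdempotentElem he hf]; simp only [mul_assoc]
      _ = b := by rw [he, mul_comm_of_isIdempotentElem hf he, ← hb]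
  rw [hab, hbe]

abbrev natPartialOrder : PartialOrder S where
  le := nle
  le_refl a := by rw [nle, ← mul_assoc, mul_inv_mul]
  le_trans a b c hab hbc :=
    nle_of_eq_mul_of_isIdempotentElem
      (isIdempotentElem_mul (isIdempotentElem_inv_mul_self b) (isIdempotentElem_inv_mul_self a))
      (by rw [← mul_assoc, ← hbc, ← hab])
  le_antisymm _ _ := nle_antisymm

theorem nle_mul_inv_mul_self (a b : S) : nle (a * (b⁻¹ * b)) a :=
  nle_of_eq_mul_of_isIdempotentElem (isIdempotentElem_inv_mul_self b) rfl

theorem mul_inv_mul_self_nle_of_compat {a b : S} (h : compat a b) : nle (a * (b⁻¹ * b)) b :=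
  nle_of_eq_mul_of_isIdempotentElem_left h.2 (mul_assoc a b⁻¹ b).symm

end

section
variable {S : Type*} [InverseSemigroupWithZero S]

variable (S) in
def Ramified : Prop :=
  ∀ a b c : S, nle a b → nle a c → a ≠ 0 → nle b c ∨ nle c b

theorem orth_of_compat_of_mul_inv_mul_self_eq_zero {a b : S} (h : compat a b)
    (h0 : a * (b⁻¹ * b) = 0) : orth a b := by
  have hab : a * b⁻¹ = 0 := by
    rw [← inv_mul_inv b, ← mul_assoc, ← mul_assoc, mul_assoc a, h0,
      InverseSemigroupWithZero.zero_mul]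
  have hsymm : a⁻¹ * b = b⁻¹ * a := by
    rw [← inv_eq_self_of_isIdempotentElem h.1, mul_inv_rev_eq, inv_inv_eq]
  refine ⟨?_, hab⟩
  calc a⁻¹ * b = a⁻¹ * b * (b⁻¹ * b) := by simp only [mul_assoc]; rw [← mul_assoc b, mul_inv_mul]
    _ = b⁻¹ * (a * b⁻¹) * b := by rw [hsymm]; simp only [mul_assoc]
    _ = 0 := by rw [hab, InverseSemigroupWithZero.mul_zero, InverseSemigroupWithZero.zero_mul]

theorem orth_or_nle_or_nle_of_compat (hS : Ramified S) {a b : S} (h : compat a b) :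
    orth a b ∨ nle a b ∨ nle b a := by
  by_cases h0 : a * (b⁻¹ * b) = 0
  · exact Or.inl (orth_of_compat_of_mul_inv_mul_self_eq_zero h h0)
  · exact Or.inr (hS _ a b (nle_mul_inv_mul_self a b) (mul_inv_mul_self_nle_of_compat h) h0)

end

end InverseSemigroup

open InverseSemigroup in
/-- In a ramified inverse semigroup with zero, every finitely generated compatible
order ideal `{a₁,…,aₙ}↓` equals `{b₁,…,bₘ}↓` for some pairwise orthogonal subset
`{b₁,…,bₘ}` of `{a₁,…,aₙ}`. -/
theorem stmt15 {S : Type*} [InverseSemigroupWithZero S]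
    (hram : ∀ a b c : S, nle a b → nle a c → a ≠ 0 → (nle b c ∨ nle c b))
    (F : Finset S) (hF : ∀ a ∈ F, ∀ b ∈ F, compat a b) :
    ∃ G : Finset S, G ⊆ F ∧ (∀ a ∈ G, ∀ b ∈ G, a ≠ b → orth a b) ∧
      {x : S | ∃ a ∈ F, nle x a} = {x : S | ∃ b ∈ G, nle x b} := by
  classical
  let _ := natPartialOrder (S := S)
  refine ⟨F.filter (Maximal (· ∈ F)), F.filter_subset _, ?_, ?_⟩
  · intro a ha b hb hne
    rw [Finset.mem_filter] at ha hb
    rcases orth_or_nle_or_nle_of_compat hram (hF a ha.1 b hb.1) with h | h | h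
    · exact h
    · exact absurd (ha.2.eq_of_le hb.1 h) hne
    · exact absurd (hb.2.eq_of_le ha.1 h).symm hne
  · ext x
    constructor
    · rintro ⟨a, ha, hxa⟩
      obtain ⟨b, hab, hb⟩ := F.exists_le_maximal ha
      exact ⟨b, Finset.mem_filter.2 ⟨hb.1, hb⟩, le_trans (α := S) hxa hab⟩
    · rintro ⟨b, hb, hxb⟩
      exact ⟨b, F.filter_subset _ hb, hxb⟩
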